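/- Let Ωᵢ = B̄(ωᵢ; rᵢ) (i = 1, …, n, n > 1) be closed balls in ℝᵐ (Euclidean norm) with empty intersection, let B̄(x̄; r) be the smallest intersecting ball (x̄ minimizes D(x) = max_i (‖x − ωᵢ‖ − rᵢ), r = D(x̄)), let P = {ω₁, …, ωₙ}, r_max = max_i rᵢ, r_min = min_i rᵢ, and ℓ = min{m+1, n}. Then (1/2)·diam P − r_max ≤ r ≤ √((ℓ−1)/(2ℓ))·diam P − r_min. -/

import Mathlib

/-!
The lower bound holds because every centre lies within `r + r_max` of `x̄`. The upper bound is
Jung's theorem: a point `x` minimising the largest distance `R` to the centres lies in the convex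
hull of the centres at distance `R` (otherwise a hyperplane separating `x` from that hull gives a
direction in which all these distances decrease), hence by Carathéodory is a convex combination
`∑ wᵢ zᵢ` of at most `ℓ` of them. By the parallel-axis identity `∑ᵢ wᵢ ‖zᵢ - z_j‖² = 2R²` for
every `j`; weighting by `w_j` and summing gives
`2R² ≤ (1 - ∑ w_j²) (diam P)² ≤ (1 - 1/ℓ) (diam P)²`. Finally `r = D x̄ ≤ D x ≤ R - r_min`.
-/

open Metric Finset Filter Topology

variable {E : Type*} [NormedAddCommGroup E] [InnerProductSpace ℝ E]

lemma eventually_norm_add_smul_lt_norm {u v : E} (h : inner ℝ u v < 0) :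
    ∀ᶠ t in 𝓝[>] (0 : ℝ), ‖u + t • v‖ < ‖u‖ := by
  have hslope : ∀ᶠ t in 𝓝 (0 : ℝ), 2 * inner ℝ u v + t * ‖v‖ ^ 2 < 0 :=
    ContinuousAt.eventually_lt (by fun_prop) continuousAt_const
      (by simpa using mul_neg_of_pos_of_neg two_pos h)
  filter_upwards [self_mem_nhdsWithin, nhdsWithin_le_nhds hslope] with t (ht : 0 < t) hslope
  have hsq : ‖u + t • v‖ ^ 2 = ‖u‖ ^ 2 + t * (2 * inner ℝ u v + t * ‖v‖ ^ 2) := by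
    rw [norm_add_sq_real, inner_smul_right, norm_smul, Real.norm_of_nonneg ht.le]
    ring
  have : ‖u + t • v‖ ^ 2 < ‖u‖ ^ 2 := by nlinarith
  exact lt_of_pow_lt_pow_left₀ 2 (norm_nonneg u) this

lemma exists_isMinOn_sup'_dist {X : Type*} [MetricSpace X] [ProperSpace X]
    (s : Finset X) (hs : s.Nonempty) :
    ∃ x, IsMinOn (fun y => s.sup' hs (dist y)) Set.univ x := by
  obtain ⟨p, hp⟩ := id hs
  have : Nonempty X := ⟨p⟩
  have hcont : Continuous fun y => s.sup' hs (dist y) :=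
    Continuous.finset_sup'_apply hs fun q _ => continuous_id.dist continuous_const
  have hcoercive : Tendsto (fun y => s.sup' hs (dist y)) (cocompact X) atTop :=
    tendsto_atTop_mono (fun y => le_sup' (dist y) hp) (tendsto_dist_right_cocompact_atTop p)
  obtain ⟨x, hx⟩ := hcont.exists_forall_le hcoercive
  exact ⟨x, fun y _ => hx y⟩

lemma mem_convexHull_farthest_of_isMinOn [CompleteSpace E] {s : Finset E} (hs : s.Nonempty)
    {x : E} (hx : IsMinOn (fun y => s.sup' hs (dist y)) Set.univ x) :
    x ∈ convexHull ℝ ({p ∈ s | dist x p = s.sup' hs (dist x)} : Finset E) := by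
  set R := s.sup' hs (dist x)
  set A : Finset E := {p ∈ s | dist x p = R}
  by_contra hxA
  obtain ⟨f, u, hfx, hfA⟩ := geometric_hahn_banach_point_closed (convex_convexHull ℝ _)
    (A.finite_toSet.isClosed_convexHull ℝ) hxA
  set v := (InnerProductSpace.toDual ℝ E).symm f
  have hcloser : ∀ p ∈ s, ∀ᶠ t in 𝓝[>] (0 : ℝ), dist (x + t • v) p < R := by
    intro p hp
    by_cases hpA : dist x p = R
    · have hinner : inner ℝ (x - p) v < 0 := by
        rw [real_inner_comm, InnerProductSpace.toDual_symm_apply, map_sub, sub_neg]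
        exact hfx.trans (hfA p (subset_convexHull ℝ _ (by simp [A, hp, hpA])))
      filter_upwards [eventually_norm_add_smul_lt_norm hinner] with t ht
      rwa [dist_eq_norm, add_sub_right_comm, ← hpA, dist_eq_norm]
    · have hlt : dist x p < R := (le_sup' (dist x) hp).lt_of_ne hpA
      refine nhdsWithin_le_nhds (ContinuousAt.eventually_lt (by fun_prop) continuousAt_const ?_)
      simpa using hlt
  obtain ⟨t, ht⟩ := ((eventually_all_finset s).2 hcloser).exists
  exact (hx (Set.mem_univ (x + t • v))).not_gt ((sup'_lt_iff hs).2 ht)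

lemma sum_mul_norm_sub_sq_eq {ι : Type*} {s : Finset ι} {w : ι → ℝ} {z : ι → E} {x : E}
    (hw : ∑ i ∈ s, w i = 1) (hx : ∑ i ∈ s, w i • z i = x) (y : E) :
    ∑ i ∈ s, w i * ‖z i - y‖ ^ 2 = ∑ i ∈ s, w i * ‖z i - x‖ ^ 2 + ‖x - y‖ ^ 2 := by
  have hcentred : ∑ i ∈ s, w i • (z i - x) = 0 := by
    simp [smul_sub, sum_sub_distrib, hx, ← sum_smul, hw]
  have hcross : ∑ i ∈ s, w i * inner ℝ (z i - x) (x - y) = 0 := by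
    simp_rw [← real_inner_smul_left, ← sum_inner, hcentred, inner_zero_left]
  calc ∑ i ∈ s, w i * ‖z i - y‖ ^ 2
      = ∑ i ∈ s, (w i * ‖z i - x‖ ^ 2 + 2 * (w i * inner ℝ (z i - x) (x - y))
          + w i * ‖x - y‖ ^ 2) := by
        refine sum_congr rfl fun i _ => ?_
        rw [← sub_add_sub_cancel (z i) x y, norm_add_sq_real]
        ring
    _ = ∑ i ∈ s, w i * ‖z i - x‖ ^ 2 + ‖x - y‖ ^ 2 := by
        rw [sum_add_distrib, sum_add_distrib, ← mul_sum, hcross, ← sum_mul, hw]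
        ring

lemma sq_le_of_sum_smul_eq_of_forall_dist_eq {t : Finset E} {w : E → ℝ} {x : E} {R d : ℝ}
    (hw₀ : ∀ y ∈ t, 0 ≤ w y) (hw₁ : ∑ y ∈ t, w y = 1) (hx : ∑ y ∈ t, w y • y = x)
    (hR : ∀ y ∈ t, dist y x = R) (hd : ∀ y ∈ t, ∀ z ∈ t, dist y z ≤ d) :
    R ^ 2 ≤ ((#t : ℝ) - 1) / (2 * #t) * d ^ 2 := by
  have hcard : (0 : ℝ) < #t := by
    rw [Nat.cast_pos, Finset.card_pos]
    exact nonempty_of_sum_ne_zero (hw₁ ▸ one_ne_zero)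
  have hsum_sq : 1 / (#t : ℝ) ≤ ∑ y ∈ t, w y ^ 2 := by
    have := sq_sum_le_card_mul_sum_sq (s := t) (f := w)
    rw [hw₁, one_pow] at this
    rw [div_le_iff₀ hcard]
    linarith
  have hmoment : ∀ z ∈ t, ∑ y ∈ t, w y * dist y z ^ 2 = 2 * R ^ 2 := by
    intro z hz
    simp_rw [dist_eq_norm] at hR ⊢
    rw [sum_mul_norm_sub_sq_eq hw₁ hx z, ← norm_neg, neg_sub, hR z hz,
      sum_congr rfl fun y hy => by rw [hR y hy], ← sum_mul, hw₁]
    ring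
  have hmoment_le : ∀ z ∈ t, ∑ y ∈ t, w y * dist y z ^ 2 ≤ (1 - w z) * d ^ 2 := by
    intro z hz
    classical
    calc ∑ y ∈ t, w y * dist y z ^ 2 = ∑ y ∈ t.erase z, w y * dist y z ^ 2 := by
          rw [sum_erase _ (by simp)]
      _ ≤ ∑ y ∈ t.erase z, w y * d ^ 2 := by
          refine sum_le_sum fun y hy => ?_
          have hy := mem_of_mem_erase hy
          gcongr
          exacts [hw₀ y hy, hd y hy z hz]
      _ = (1 - w z) * d ^ 2 := by rw [← sum_mul, sum_erase_eq_sub hz, hw₁]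
  calc R ^ 2 = (∑ z ∈ t, w z * ∑ y ∈ t, w y * dist y z ^ 2) / 2 := by
        rw [sum_congr rfl fun z hz => by rw [hmoment z hz], ← sum_mul, hw₁]
        ring
    _ ≤ (∑ z ∈ t, w z * ((1 - w z) * d ^ 2)) / 2 := by
        gcongr with z hz
        exacts [hw₀ z hz, hmoment_le z hz]
    _ = (1 - ∑ z ∈ t, w z ^ 2) * d ^ 2 / 2 := by
        have hexpand : ∀ z, w z * ((1 - w z) * d ^ 2) = w z * d ^ 2 - w z ^ 2 * d ^ 2 :=
          fun z => by ring
        simp_rw [hexpand, sum_sub_distrib, ← sum_mul, hw₁]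
        ring
    _ ≤ (1 - 1 / #t) * d ^ 2 / 2 := by gcongr
    _ = ((#t : ℝ) - 1) / (2 * #t) * d ^ 2 := by field_simp

lemma sub_one_div_two_mul_le_sub_one_div_two_mul {k l : ℕ} (hk : 0 < k) (hkl : k ≤ l) :
    ((k : ℝ) - 1) / (2 * k) ≤ ((l : ℝ) - 1) / (2 * l) := by
  have hk' : (0 : ℝ) < k := by exact_mod_cast hk
  have hkl' : (k : ℝ) ≤ l := by exact_mod_cast hkl
  rw [div_le_div_iff₀ (by positivity) (by linarith)]
  nlinarith

theorem exists_subset_closedBall_sqrt_mul_diam [FiniteDimensional ℝ E] (s : Finset E)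
    (hs : s.Nonempty) :
    ∃ x, (s : Set E) ⊆ closedBall x (√(((min (Module.finrank ℝ E + 1) #s : ℕ) - 1) /
      (2 * (min (Module.finrank ℝ E + 1) #s : ℕ))) * diam (s : Set E)) := by
  classical
  obtain ⟨x, hx⟩ := exists_isMinOn_sup'_dist s hs
  set R := s.sup' hs (dist x)
  set A : Finset E := {p ∈ s | dist x p = R}
  obtain ⟨t, htA, ht_indep, hxt⟩ : ∃ t : Finset E, (t : Set E) ⊆ A ∧
      AffineIndependent ℝ ((↑) : t → E) ∧ x ∈ convexHull ℝ (t : Set E) := by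
    have := mem_convexHull_farthest_of_isMinOn hs hx
    rw [convexHull_eq_union] at this
    simpa only [Set.mem_iUnion, exists_prop] using this
  obtain ⟨w, hw₀, hw₁, hwx⟩ := Finset.mem_convexHull'.1 hxt
  have htA : t ⊆ A := by exact_mod_cast htA
  have hts : t ⊆ s := htA.trans (filter_subset _ s)
  have hR : R ^ 2 ≤ ((#t : ℝ) - 1) / (2 * #t) * diam (s : Set E) ^ 2 := by
    refine sq_le_of_sum_smul_eq_of_forall_dist_eq hw₀ hw₁ hwx (fun y hy => ?_)
      fun y hy z hz => ?_
    · rw [dist_comm]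
      exact (mem_filter.1 (htA hy)).2
    · exact dist_le_diam_of_mem s.finite_toSet.isBounded (hts hy) (hts hz)
  have ht_card : #t ≤ min (Module.finrank ℝ E + 1) #s := by
    refine le_min ?_ (card_le_card hts)
    have := ht_indep.card_le_finrank_succ
    rw [Fintype.card_coe] at this
    exact this.trans (Nat.add_le_add_right (Submodule.finrank_le _) 1)
  have ht_pos : 0 < #t := card_pos.2 (coe_nonempty.1 (convexHull_nonempty_iff.1 ⟨x, hxt⟩))
  refine ⟨x, fun p hp => ?_⟩
  rw [mem_closedBall, dist_comm]
  calc dist x p ≤ R := le_sup' (dist x) hp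
    _ ≤ √(((#t : ℝ) - 1) / (2 * #t) * diam (s : Set E) ^ 2) := Real.le_sqrt_of_sq_le hR
    _ ≤ _ := by
      rw [Real.sqrt_mul' _ (sq_nonneg _), Real.sqrt_sq diam_nonneg]
      exact mul_le_mul_of_nonneg_right (Real.sqrt_le_sqrt
        (sub_one_div_two_mul_le_sub_one_div_two_mul ht_pos ht_card)) diam_nonneg

/-- Estimates for the radius of the smallest intersecting ball generated by closed
balls in ℝᵐ with empty intersection:
`(1/2)·diam P − r_max ≤ r ≤ √((ℓ−1)/(2ℓ))·diam P − r_min`, where `P` is the set of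
centers and `ℓ = min{m+1, n}`. -/
theorem radius_estimate_balls
    (m n : ℕ) (hn : 1 < n) (ω : Fin n → EuclideanSpace ℝ (Fin m))
    (r : Fin n → ℝ)
    (D : EuclideanSpace ℝ (Fin m) → ℝ)
    (hD : D = fun x => Finset.univ.sup' (Finset.univ_nonempty_iff.2 ⟨⟨0, by omega⟩⟩)
      fun i => ‖x - ω i‖ - r i)
    (xbar : EuclideanSpace ℝ (Fin m)) (hmin : IsMinOn D Set.univ xbar)
    (rad : ℝ) (hrad : rad = D xbar)
    (rmax rmin : ℝ)
    (hrmax : rmax = Finset.univ.sup' (Finset.univ_nonempty_iff.2 ⟨⟨0, by omega⟩⟩) r)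
    (hrmin : rmin = Finset.univ.inf' (Finset.univ_nonempty_iff.2 ⟨⟨0, by omega⟩⟩) r)
    (ℓ : ℕ) (hℓ : ℓ = min (m + 1) n) :
    (1 / 2) * Metric.diam (Set.range ω) - rmax ≤ rad ∧
      rad ≤ Real.sqrt (((ℓ : ℝ) - 1) / (2 * ℓ)) * Metric.diam (Set.range ω) - rmin := by
  have : Nonempty (Fin n) := ⟨⟨0, by omega⟩⟩
  have hD_ge : ∀ x i, ‖x - ω i‖ - r i ≤ D x := fun x i => by
    subst hD
    exact le_sup' (fun i => ‖x - ω i‖ - r i) (mem_univ i)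
  have hrmax_ge : ∀ i, r i ≤ rmax := fun i => hrmax ▸ le_sup' r (mem_univ i)
  have hrmin_le : ∀ i, rmin ≤ r i := fun i => hrmin ▸ inf'_le r (mem_univ i)
  constructor
  · have hball : Set.range ω ⊆ closedBall xbar (rad + rmax) := by
      rintro _ ⟨i, rfl⟩
      rw [mem_closedBall, dist_comm, dist_eq_norm]
      linarith [hD_ge xbar i, hrmax_ge i]
    have hdiam := diam_le_of_subset_closedBall
      ((dist_nonneg.trans (hball ⟨Classical.arbitrary _, rfl⟩) : 0 ≤ rad + rmax)) hball
    linarith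
  · obtain ⟨x, hx⟩ :=
      exists_subset_closedBall_sqrt_mul_diam (univ.image ω) (univ_nonempty.image ω)
    simp only [coe_image, coe_univ, Set.image_univ, finrank_euclideanSpace_fin] at hx
    set k := min (m + 1) #(univ.image ω)
    have hk_pos : 0 < k := lt_min m.succ_pos (univ_nonempty.image ω).card_pos
    have hkℓ : k ≤ ℓ := hℓ ▸ min_le_min_left _ (card_image_le.trans_eq (card_fin n))
    have hc : √(((k : ℝ) - 1) / (2 * k)) ≤ √(((ℓ : ℝ) - 1) / (2 * ℓ)) :=
      Real.sqrt_le_sqrt (sub_one_div_two_mul_le_sub_one_div_two_mul hk_pos hkℓ)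
    have hDx : D x ≤ √(((ℓ : ℝ) - 1) / (2 * ℓ)) * diam (Set.range ω) - rmin := by
      rw [hD]
      refine sup'_le _ _ fun i _ => ?_
      have hi := mem_closedBall.1 (hx ⟨i, rfl⟩)
      rw [dist_eq_norm, norm_sub_rev] at hi
      linarith [hrmin_le i, mul_le_mul_of_nonneg_right hc (diam_nonneg (s := Set.range ω))]
    exact hrad ▸ (hmin (Set.mem_univ x)).trans hDx
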